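/- arXiv:2101.05379 — 3 statements merged into one kernel-verified Lean document; each statement's English description precedes it below -/
import Mathlib

section
/- Let (x*, X*) be an optimal solution of P_o^CPP. If Q is positive semidefinite and x* is feasible for P^MBQP (i.e., x* ≥ 0, a_jᵀx* = b_j for all j, and x*_k ∈ {0,1} for all k ∈ B), then x* is an optimal solution of P^MBQP. -/
/-! For a feasible `(x, X)` of `P_o^CPP` the bordered matrix `[[1, xᵀ], [x, X]]` is completely
positive, hence positive semidefinite, so its Schur complement `X - x xᵀ` is positive semidefinite;
as `Q ⪰ 0` this gives `Tr(QX) ≥ xᵀQx`, so the objective of `P_o^CPP` dominates that of `P^MBQP`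
at `x`. Conversely a feasible `y` of `P^MBQP` lifts to the feasible point `(y, y yᵀ)` of
`P_o^CPP` with the same objective value. Hence
`obj(x*) ≤ obj_CPP(x*, X*) ≤ obj_CPP(y, y yᵀ) = obj(y)`. -/

open Matrix BigOperators

/-- The completely positive cone: `M = A * Aᵀ` for some entrywise nonnegative matrix `A`. -/
def IsCP {ι : Type*} [Fintype ι] (M : Matrix ι ι ℝ) : Prop :=
  ∃ (r : ℕ) (A : Matrix ι (Fin r) ℝ), (∀ i j, 0 ≤ A i j) ∧ M = A * Aᵀ

/-- The bordered matrix `[[1, xᵀ],[x, X]]`. -/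
def border {ι : Type*} (x : ι → ℝ) (X : Matrix ι ι ℝ) :
    Matrix (Unit ⊕ ι) (Unit ⊕ ι) ℝ :=
  Matrix.fromBlocks 1 (Matrix.of fun _ j => x j) (Matrix.of fun i _ => x i) X

/-- Feasibility for the mixed-binary quadratic program `P^MBQP`. -/
def MBQPFeas {n m : ℕ} (a : Fin m → Fin n → ℝ) (b : Fin m → ℝ) (B : Set (Fin n))
    (x : Fin n → ℝ) : Prop :=
  (∀ j, a j ⬝ᵥ x = b j) ∧ (∀ k ∈ B, x k = 0 ∨ x k = 1) ∧ (∀ i, 0 ≤ x i)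

/-- Objective of `P^MBQP`: `xᵀQx + 2cᵀx`. -/
def MBQPObj {n : ℕ} (Q : Matrix (Fin n) (Fin n) ℝ) (c : Fin n → ℝ) (x : Fin n → ℝ) : ℝ :=
  x ⬝ᵥ (Q *ᵥ x) + 2 * (c ⬝ᵥ x)

/-- Feasibility for the completely positive reformulation `P_o^CPP`. -/
def CPPoFeas {n m : ℕ} (a : Fin m → Fin n → ℝ) (b : Fin m → ℝ) (B : Set (Fin n))
    (x : Fin n → ℝ) (X : Matrix (Fin n) (Fin n) ℝ) : Prop :=
  (∀ j, a j ⬝ᵥ x = b j) ∧ (∀ j, a j ⬝ᵥ (X *ᵥ a j) = (b j) ^ 2) ∧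
  (∀ k ∈ B, x k = X k k) ∧ IsCP (border x X)

/-- Objective of `P_o^CPP`: `Tr(QX) + 2cᵀx`. -/
def CPPoObj {n : ℕ} (Q : Matrix (Fin n) (Fin n) ℝ) (c : Fin n → ℝ)
    (x : Fin n → ℝ) (X : Matrix (Fin n) (Fin n) ℝ) : ℝ :=
  Matrix.trace (Q * X) + 2 * (c ⬝ᵥ x)

open scoped MatrixOrder ComplexOrder

section

variable {ι : Type*} [Fintype ι]

theorem Matrix.PosSemidef.trace_mul_nonneg {𝕜 : Type*} [RCLike 𝕜] {Q M : Matrix ι ι 𝕜}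
    (hQ : Q.PosSemidef) (hM : M.PosSemidef) : 0 ≤ (Q * M).trace := by
  classical
  obtain ⟨S, rfl⟩ := CStarAlgebra.nonneg_iff_eq_star_mul_self.mp hQ.nonneg
  rw [star_eq_conjTranspose, Matrix.mul_assoc, trace_mul_comm]
  exact (hM.mul_mul_conjTranspose_same S).trace_nonneg

theorem IsCP.posSemidef {M : Matrix ι ι ℝ} (h : IsCP M) : M.PosSemidef := by
  obtain ⟨r, A, -, rfl⟩ := h
  simpa only [conjTranspose_eq_transpose_of_trivial] using posSemidef_self_mul_conjTranspose A

theorem posSemidef_sub_vecMulVec_of_border {x : ι → ℝ} {X : Matrix ι ι ℝ}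
    (h : (border x X).PosSemidef) : (X - vecMulVec x x).PosSemidef := by
  let row : Matrix Unit ι ℝ := of fun _ j => x j
  have hcol : (of fun i _ => x i) = rowᴴ := by ext; simp [row]
  have hgram : rowᴴ * row = vecMulVec x x := by ext; simp [row, mul_apply, vecMulVec_apply]
  -- not found by instance search
  have : Invertible (1 : Matrix Unit Unit ℝ) := invertibleOne
  rwa [border, hcol, PosDef.fromBlocks₁₁ row X PosDef.one, inv_one, Matrix.mul_one, hgram] at h

theorem isCP_border_vecMulVec {y : ι → ℝ} (hy : 0 ≤ y) : IsCP (border y (vecMulVec y y)) := by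
  refine ⟨1, of fun p _ => Sum.elim 1 y p, ?_, ?_⟩
  · rintro (i | i) j
    · simp
    · simpa using hy i
  · ext (p | p) (q | q) <;> simp [border, mul_apply, vecMulVec_apply]

theorem trace_mul_vecMulVec_self {R : Type*} [CommSemiring R] (Q : Matrix ι ι R) (y : ι → R) :
    (Q * vecMulVec y y).trace = y ⬝ᵥ (Q *ᵥ y) := by
  rw [mul_vecMulVec, trace_vecMulVec, dotProduct_comm]

theorem dotProduct_vecMulVec_self_mulVec {R : Type*} [CommSemiring R] (y u : ι → R) :
    u ⬝ᵥ (vecMulVec y y *ᵥ u) = (y ⬝ᵥ u) ^ 2 := by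
  rw [vecMulVec_mulVec, op_smul_eq_smul, dotProduct_smul, smul_eq_mul, dotProduct_comm, sq]

end

section

variable {n m : ℕ} {a : Fin m → Fin n → ℝ} {b : Fin m → ℝ} {B : Set (Fin n)}

theorem CPPoFeas.of_mbqpFeas {y : Fin n → ℝ} (hy : MBQPFeas a b B y) :
    CPPoFeas a b B y (vecMulVec y y) := by
  obtain ⟨hya, hyB, hynn⟩ := hy
  refine ⟨hya, fun j => ?_, fun k hk => ?_, isCP_border_vecMulVec hynn⟩
  · rw [dotProduct_vecMulVec_self_mulVec, dotProduct_comm, hya j]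
  · rcases hyB k hk with h | h <;> simp [vecMulVec_apply, h]

theorem cppoObj_vecMulVec_self (Q : Matrix (Fin n) (Fin n) ℝ) (c y : Fin n → ℝ) :
    CPPoObj Q c y (vecMulVec y y) = MBQPObj Q c y := by
  rw [CPPoObj, MBQPObj, trace_mul_vecMulVec_self]

theorem mbqpObj_le_cppoObj {Q : Matrix (Fin n) (Fin n) ℝ} (hQ : Q.PosSemidef) (c : Fin n → ℝ)
    {x : Fin n → ℝ} {X : Matrix (Fin n) (Fin n) ℝ} (hX : IsCP (border x X)) :
    MBQPObj Q c x ≤ CPPoObj Q c x X := by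
  have hgap := hQ.trace_mul_nonneg (posSemidef_sub_vecMulVec_of_border hX.posSemidef)
  rw [Matrix.mul_sub, trace_sub, trace_mul_vecMulVec_self] at hgap
  rw [MBQPObj, CPPoObj]
  linarith

end

/-- if `(x*, X*)` is optimal for `P_o^CPP`, `Q` is positive semidefinite,
and `x*` is feasible for `P^MBQP`, then `x*` is optimal for `P^MBQP`. -/
theorem cppo_optimal_feasible_implies_mbqp_optimal {n m : ℕ}
    (Q : Matrix (Fin n) (Fin n) ℝ) (hQ : Q.PosSemidef) (c : Fin n → ℝ)
    (a : Fin m → Fin n → ℝ) (b : Fin m → ℝ) (B : Set (Fin n))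
    (xs : Fin n → ℝ) (Xs : Matrix (Fin n) (Fin n) ℝ)
    (hfeas : CPPoFeas a b B xs Xs)
    (hopt : ∀ y Y, CPPoFeas a b B y Y → CPPoObj Q c xs Xs ≤ CPPoObj Q c y Y)
    (hxfeas : MBQPFeas a b B xs) :
    MBQPFeas a b B xs ∧ ∀ y, MBQPFeas a b B y → MBQPObj Q c xs ≤ MBQPObj Q c y := by
  refine ⟨hxfeas, fun y hy => ?_⟩
  calc MBQPObj Q c xs ≤ CPPoObj Q c xs Xs := mbqpObj_le_cppoObj hQ c hfeas.2.2.2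
    _ ≤ CPPoObj Q c y (vecMulVec y y) := hopt _ _ (.of_mbqpFeas hy)
    _ = MBQPObj Q c y := cppoObj_vecMulVec_self Q c y
end

section
/- Let Ω̄ be an n_c×n_c real symmetric matrix and suppose (w̄, z̄, ū) is a feasible point of the separation problem SP(Ω̄) with w̄ > 0; that is: ū ∈ {0,1}^{n_c} with Σ_{i=1}^{n_c} ū_i ≥ 1, 0 ≤ z̄ ≤ ū componentwise, w̄ > 0, and (Ω̄z̄)_i ≤ −w̄ for every index i with ū_i = 1. Then z̄ᵀΩ̄z̄ < 0; in particular, Ω̄ violates the cutting plane z̄ᵀΩz̄ ≥ 0 and is not copositive. -/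
open Matrix BigOperators

/-- The copositive cone (quadratic-form condition on nonnegative vectors). -/
def IsCopos {ι : Type*} [Fintype ι] (M : Matrix ι ι ℝ) : Prop :=
  ∀ y : ι → ℝ, (∀ i, 0 ≤ y i) → 0 ≤ y ⬝ᵥ (M *ᵥ y)

/-- a feasible point of the separation problem `SP(Ω̄)` with positive
objective certifies `z̄ᵀΩ̄z̄ < 0`; in particular `Ω̄` violates the cut `z̄ᵀΩz̄ ≥ 0`
and is not copositive. -/
theorem separation_positive_objective_cuts_off {nc : ℕ}
    (Ω : Matrix (Fin nc) (Fin nc) ℝ) (hΩ : Ω.IsSymm)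
    (w : ℝ) (z u : Fin nc → ℝ)
    (hu01 : ∀ i, u i = 0 ∨ u i = 1)
    (husum : 1 ≤ ∑ i, u i)
    (hz : ∀ i, 0 ≤ z i ∧ z i ≤ u i)
    (hw : 0 < w)
    (hsep : ∀ i, u i = 1 → (Ω *ᵥ z) i ≤ -w) :
    z ⬝ᵥ (Ω *ᵥ z) < 0 ∧ ¬ IsCopos Ω := by
  have key : z ⬝ᵥ (Ω *ᵥ z) < 0 := by
    by_cases hz0 : ∃ j, 0 < z j
    · obtain ⟨j, hj⟩ := hz0
      have huj : u j = 1 := by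
        rcases hu01 j with h | h
        · have := (hz j).2; linarith
        · exact h
      have hdp : z ⬝ᵥ (Ω *ᵥ z) = ∑ i, z i * (Ω *ᵥ z) i := rfl
      rw [hdp]
      have h0 : (0 : ℝ) = ∑ _i : Fin nc, (0 : ℝ) := by simp
      rw [h0]
      apply Finset.sum_lt_sum
      · intro i _
        rcases hu01 i with h | h
        · have h1 := (hz i).1
          have h2 := (hz i).2
          have : z i = 0 := le_antisymm (h ▸ h2) h1
          simp [this]
        · have hle := hsep i h
          have : (Ω *ᵥ z) i ≤ 0 := by linarith
          exact mul_nonpos_of_nonneg_of_nonpos (hz i).1 this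
      · refine ⟨j, Finset.mem_univ j, ?_⟩
        have hle := hsep j huj
        have : (Ω *ᵥ z) j < 0 := by linarith
        exact mul_neg_of_pos_of_neg hj this
    · push_neg at hz0
      have hzeq : z = 0 := by
        funext i
        exact le_antisymm (hz0 i) (hz i).1
      have hi0 : ∃ i, u i = 1 := by
        by_contra h
        push_neg at h
        have : ∀ i, u i = 0 := fun i => (hu01 i).resolve_right (h i)
        simp [this] at husum
        linarith
      obtain ⟨i0, hi0⟩ := hi0
      have := hsep i0 hi0
      rw [hzeq] at this
      simp [Matrix.mulVec_zero] at this
      linarith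
  refine ⟨key, fun hc => ?_⟩
  have := hc z fun i => (hz i).1
  linarith
end

section
/- Under RCDP pricing the system operator is revenue neutral: if the production levels p*_{gt} satisfy the power balance Σ_{g∈G} p*_{gt} = d_t for every t ∈ T, and the RCDP payments are defined by π^L'_t = λ*_t d_t + Λ*_t d_t² (collected from the load) and π^G'_{gt} = λ*_t p*_{gt} + Λ*_t (p*_{gt})² + Σ_{g'≠g} Λ*_t p*_{gt} p*_{g't} (paid to generator g), then π^L'_t = Σ_{g∈G} π^G'_{gt} for every t ∈ T. -/
open BigOperators Finset

/-- under RCDP pricing the system operator is revenue neutral: if the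
power balance `Σ_g p*_{gt} = d_t` holds for every `t`, then for every `t` the load
payment `π^L'_t = λ*_t d_t + Λ*_t d_t²` equals the total generator payment
`Σ_g π^G'_{gt}`, where
`π^G'_{gt} = λ*_t p*_{gt} + Λ*_t (p*_{gt})² + Σ_{g'≠g} Λ*_t p*_{gt} p*_{g't}`. -/
theorem rcdp_revenue_neutral {G T : Type*} [Fintype G] [DecidableEq G] [Fintype T]
    (d : T → ℝ) (p : G → T → ℝ) (lam Lam : T → ℝ)
    (hbal : ∀ t, ∑ g, p g t = d t) :
    ∀ t, lam t * d t + Lam t * (d t) ^ 2 =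
      ∑ g, (lam t * p g t + Lam t * (p g t) ^ 2 +
        ∑ g' ∈ Finset.univ.erase g, Lam t * p g t * p g' t) := by
  intro t
  rw [← hbal t]
  have h : ∀ g : G, lam t * p g t + Lam t * (p g t) ^ 2 +
      ∑ g' ∈ Finset.univ.erase g, Lam t * p g t * p g' t
      = lam t * p g t + ∑ g' : G, Lam t * p g t * p g' t := by
    intro g
    rw [← Finset.add_sum_erase _ (fun g' => Lam t * p g t * p g' t) (Finset.mem_univ g)]
    ring
  simp only [h, Finset.sum_add_distrib]
  have hsq : (∑ g : G, p g t) ^ 2 = ∑ g : G, ∑ g' : G, p g t * p g' t := by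
    rw [sq, Finset.sum_mul_sum]
  rw [hsq, ← Finset.mul_sum]
  congr 1
  rw [Finset.mul_sum]
  refine Finset.sum_congr rfl fun g _ => ?_
  rw [Finset.mul_sum]
  exact Finset.sum_congr rfl fun g' _ => by ring
end
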